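/- arXiv:1611.06558 — 2 statements merged into one kernel-verified Lean document; each statement's English description precedes it below -/
import Mathlib

section
/- Let ψ ∈ 𝒯ₙ. For every pair of commuting families A = (A₁,…,Aₙ) and B = (B₁,…,Bₙ) from Gen(X)ⁿ such that each Aᵢ − Bᵢ is bounded, D(Aᵢ) = D(Bᵢ), and the semigroups T_{Aᵢ} and T_{Bᵢ} are exponentially stable with ‖T_{Aᵢ}(t)‖ ≤ M e^{ωᵢ t} and ‖T_{Bᵢ}(t)‖ ≤ M e^{ωᵢ t} for some ωᵢ < 0 (i = 1,…,n), the operator ψ(A) − ψ(B) is bounded and ‖ψ(A) − ψ(B)‖ ≤ M^{n+1} · Σᵢ₌₁ⁿ (∂ψ(ωᵢ𝐞ᵢ)/∂sᵢ) ‖Aᵢ − Bᵢ‖, where 𝐞ᵢ denotes the i-th standard basis vector of ℝⁿ. -/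
open MeasureTheory Complex ContinuousLinearMap
open Filter Set
set_option linter.unusedSectionVars false
set_option linter.unusedVariables false
set_option maxHeartbeats 1000000

noncomputable section

/-- A generator of a uniformly bounded `C₀`-semigroup on a complex Banach space `X`,
bundled together with its semigroup `T`, its (maximal) domain `dom` and its action
`gen` (extended by `0` outside of the domain). -/
structure GenOp (X : Type*) [NormedAddCommGroup X] [NormedSpace ℂ X] where
  T : ℝ → X →L[ℂ] X
  T_zero : T 0 = 1
  T_add : ∀ ⦃s t : ℝ⦄, 0 ≤ s → 0 ≤ t → T (s + t) = (T s).comp (T t)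
  strong_cont : ∀ x : X, ContinuousOn (fun t => T t x) (Set.Ici 0)
  bounded : ∃ M : ℝ, ∀ t : ℝ, 0 ≤ t → ‖T t‖ ≤ M
  dom : Submodule ℂ X
  gen : X → X
  mem_dom_iff : ∀ x : X, x ∈ dom ↔ ∃ y : X,
    Filter.Tendsto (fun t : ℝ => (t : ℂ)⁻¹ • (T t x - x)) (nhdsWithin 0 (Set.Ioi 0)) (nhds y)
  gen_spec : ∀ x ∈ dom,
    Filter.Tendsto (fun t : ℝ => (t : ℂ)⁻¹ • (T t x - x)) (nhdsWithin 0 (Set.Ioi 0))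
      (nhds (gen x))
  gen_zero : ∀ x, x ∉ dom → gen x = 0

variable {X : Type*} [NormedAddCommGroup X] [NormedSpace ℂ X] [CompleteSpace X]

/-- Two semigroup generators commute if the corresponding semigroups commute. -/
def GenOp.Commutes (A B : GenOp X) : Prop :=
  ∀ ⦃s t : ℝ⦄, 0 ≤ s → 0 ≤ t → (A.T s).comp (B.T t) = (B.T t).comp (A.T s)

/-- The `n`-parameter semigroup `T_A(u) = T_{A₁}(u₁) ⋯ T_{Aₙ}(uₙ)` associated with a
family `A = (A₁, …, Aₙ)` of semigroup generators. -/
def semigrProd {n : ℕ} (A : Fin n → GenOp X) (u : Fin n → ℝ) : X →L[ℂ] X :=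
  (List.ofFn fun i => (A i).T (u i)).prod

/-- The representing measure of a Bernstein function `ψ ∈ 𝒯ₙ` with `c₀ = 0`, `c₁ = 0`
in its integral representation: a positive measure `μ` on `ℝ₊ⁿ \ {0}` such that
`e^{s·u} - 1` is `μ`-integrable for every `s ∈ (-∞,0)ⁿ`.  The associated Bernstein
function is `ψ(s) = ∫ (e^{s·u} - 1) dμ(u)`, see `bPsi`. -/
structure BernsteinMeasure (n : ℕ) where
  μ : Measure (Fin n → ℝ)
  support : μ {u | ¬ ((∀ i, 0 ≤ u i) ∧ u ≠ 0)} = 0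
  integrable : ∀ s : Fin n → ℝ, (∀ i, s i < 0) →
    Integrable (fun u => Real.exp (∑ i, s i * u i) - 1) μ

/-- The Bernstein function `ψ(s) = ∫ (e^{s·u} - 1) dμ(u)` of `n` variables associated
with a representing measure `μ`. -/
def bPsi {n : ℕ} (ρ : BernsteinMeasure n) (s : Fin n → ℝ) : ℝ :=
  ∫ u, (Real.exp (∑ i, s i * u i) - 1) ∂ρ.μ

lemma GenOp.T_comm_self (G : GenOp X) {s t : ℝ} (hs : 0 ≤ s) (ht : 0 ≤ t) (x : X) :
    G.T s (G.T t x) = G.T t (G.T s x) := by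
  have h1 := G.T_add hs ht
  have h2 := G.T_add ht hs
  rw [add_comm] at h1
  rw [h1] at h2
  have := congrArg (fun (f : X →L[ℂ] X) => f x) h2
  simpa using this

/-- Applying `T` at converging times to a converging family. -/
lemma GenOp.tendsto_apply (G : GenOp X) {M : ℝ} (hM : ∀ t : ℝ, 0 ≤ t → ‖G.T t‖ ≤ M)
    {ι : Type*} {l : Filter ι} {τ : ι → ℝ} {t₀ : ℝ} (ht₀ : 0 ≤ t₀)
    (hτ0 : ∀ᶠ i in l, 0 ≤ τ i) (hτ : Filter.Tendsto τ l (nhds t₀))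
    {f : ι → X} {y₀ : X} (hf : Filter.Tendsto f l (nhds y₀)) :
    Filter.Tendsto (fun i => G.T (τ i) (f i)) l (nhds (G.T t₀ y₀)) := by
  have h1 : Tendsto (fun i => G.T (τ i) y₀) l (nhds (G.T t₀ y₀)) := by
    have hc : Tendsto (fun u => G.T u y₀) (nhdsWithin t₀ (Set.Ici 0)) (nhds (G.T t₀ y₀)) :=
      G.strong_cont y₀ t₀ ht₀
    exact hc.comp (tendsto_nhdsWithin_iff.2 ⟨hτ, hτ0⟩)
  have h2 : Tendsto (fun i => G.T (τ i) (f i) - G.T (τ i) y₀) l (nhds 0) := by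
    refine squeeze_zero_norm' (a := fun i => M * ‖f i - y₀‖) ?_ ?_
    · filter_upwards [hτ0] with i hi
      rw [← map_sub]
      calc ‖G.T (τ i) (f i - y₀)‖ ≤ ‖G.T (τ i)‖ * ‖f i - y₀‖ := le_opNorm _ _
        _ ≤ M * ‖f i - y₀‖ := mul_le_mul_of_nonneg_right (hM _ hi) (norm_nonneg _)
    · have h3 : Tendsto (fun i => f i - y₀) l (nhds 0) := by
        simpa using hf.sub (tendsto_const_nhds (x := y₀))
      simpa using (h3.norm.const_mul M)
  have := h2.add h1
  simpa using this


lemma GenOp.M_nonneg (G : GenOp X) {M : ℝ} (hM : ∀ t : ℝ, 0 ≤ t → ‖G.T t‖ ≤ M) : 0 ≤ M :=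
  le_trans (norm_nonneg _) (hM 0 le_rfl)


/-- The quotient used in the definition of the generator. -/
def GenOp.quot (G : GenOp X) (x : X) (h : ℝ) : X := ((h : ℝ) : ℂ)⁻¹ • (G.T h x - x)

lemma GenOp.gen_spec' (G : GenOp X) {x : X} (hx : x ∈ G.dom) :
    Filter.Tendsto (G.quot x) (nhdsWithin 0 (Set.Ioi 0)) (nhds (G.gen x)) :=
  G.gen_spec x hx

lemma GenOp.T_mem_dom (G : GenOp X) {x : X} (hx : x ∈ G.dom) {t : ℝ} (ht : 0 ≤ t) :
    G.T t x ∈ G.dom ∧ G.gen (G.T t x) = G.T t (G.gen x) := by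
  have hq : Filter.Tendsto (G.quot (G.T t x)) (nhdsWithin 0 (Set.Ioi 0))
      (nhds (G.T t (G.gen x))) := by
    have h := ((G.T t).continuous.tendsto (G.gen x)).comp (G.gen_spec' hx)
    refine h.congr' ?_
    filter_upwards [self_mem_nhdsWithin] with s hs
    have hs0 : (0:ℝ) ≤ s := le_of_lt hs
    simp only [Function.comp_apply, GenOp.quot, _root_.map_smul, map_sub]
    rw [G.T_comm_self hs0 ht]
  constructor
  · exact (G.mem_dom_iff _).2 ⟨_, hq⟩
  · exact tendsto_nhds_unique (G.gen_spec' ((G.mem_dom_iff _).2 ⟨_, hq⟩)) hq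

lemma GenOp.slope_orbit_eq (G : GenOp X) (x : X) {t y : ℝ} (ht : 0 ≤ t) (hy : 0 ≤ y)
    (hne : y ≠ t) :
    slope (fun s => G.T s x) t y = G.T (min y t) (G.quot x |y - t|) := by
  have key : ∀ a b : ℝ, 0 ≤ a → 0 < b →
      (b)⁻¹ • (G.T (a + b) x - G.T a x) = G.T a (G.quot x b) := by
    intro a b ha hb
    rw [GenOp.quot, _root_.map_smul, map_sub, ← ContinuousLinearMap.comp_apply, ← G.T_add ha hb.le]
    rw [show ((b:ℝ):ℂ)⁻¹ = ((b⁻¹:ℝ):ℂ) from (Complex.ofReal_inv b).symm, Complex.coe_smul]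
  rcases lt_or_gt_of_ne hne with h | h
  · -- y < t
    have habs : |y - t| = t - y := by rw [abs_of_neg (by linarith)]; ring
    rw [habs, min_eq_left h.le, slope_def_module]
    have h1 := key y (t - y) hy (by linarith)
    rw [show y + (t - y) = t by ring] at h1
    rw [← h1]
    have hby : (t - y)⁻¹ = -((y - t)⁻¹) := by
      rw [show t - y = -(y-t) by ring, inv_neg]
    rw [hby, neg_smul, smul_sub, smul_sub]; abel
  · -- t < y
    have habs : |y - t| = y - t := abs_of_pos (by linarith)
    rw [habs, min_eq_right h.le, slope_def_module]
    have h1 := key t (y - t) ht (by linarith)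
    rw [show t + (y - t) = y by ring] at h1
    exact h1

/-- Differentiability of the orbit map on `[0, ∞)` at points of the domain. -/
lemma GenOp.tendsto_slope_orbit (G : GenOp X) {M : ℝ} (hM : ∀ t : ℝ, 0 ≤ t → ‖G.T t‖ ≤ M)
    {x : X} (hx : x ∈ G.dom) {t : ℝ} (ht : 0 ≤ t) :
    Filter.Tendsto (slope (fun s => G.T s x) t) (nhdsWithin t (Set.Ici 0 \ {t}))
      (nhds (G.T t (G.gen x))) := by
  have heq : ∀ᶠ y in nhdsWithin t (Set.Ici 0 \ {t}),
      slope (fun s => G.T s x) t y = G.T (min y t) (G.quot x |y - t|) := by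
    filter_upwards [self_mem_nhdsWithin] with y hy
    exact G.slope_orbit_eq x ht hy.1 hy.2
  refine Tendsto.congr' (by filter_upwards [heq] with y h using h.symm) ?_
  refine G.tendsto_apply hM ht ?_ ?_ (f := fun y => G.quot x |y - t|) ?_
  · filter_upwards [self_mem_nhdsWithin] with y hy
    exact le_min hy.1 ht
  · have : Filter.Tendsto (fun y : ℝ => min y t) (nhds t) (nhds (min t t)) :=
      (continuous_min.comp (continuous_id.prodMk continuous_const)).tendsto t
    rw [min_self] at this
    exact this.mono_left nhdsWithin_le_nhds
  · refine (G.gen_spec' hx).comp ?_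
    rw [tendsto_nhdsWithin_iff]
    constructor
    · have : Filter.Tendsto (fun y : ℝ => |y - t|) (nhds t) (nhds |t - t|) :=
        (_root_.continuous_abs.comp (continuous_id.sub continuous_const)).tendsto t
      simp only [sub_self, abs_zero] at this
      exact this.mono_left nhdsWithin_le_nhds
    · filter_upwards [self_mem_nhdsWithin] with y hy
      exact abs_pos.2 (sub_ne_zero.2 hy.2)

lemma GenOp.hasDerivWithinAt_orbit (G : GenOp X) {M : ℝ} (hM : ∀ t : ℝ, 0 ≤ t → ‖G.T t‖ ≤ M)
    {x : X} (hx : x ∈ G.dom) {t : ℝ} (ht : 0 ≤ t) :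
    HasDerivWithinAt (fun s => G.T s x) (G.T t (G.gen x)) (Set.Ici 0) t :=
  hasDerivWithinAt_iff_tendsto_slope.2 (G.tendsto_slope_orbit hM hx ht)

/-- Duhamel-type estimate on the domain. -/
lemma duhamel_bound (GA GB : GenOp X) {M ω : ℝ}
    (hMA : ∀ t : ℝ, 0 ≤ t → ‖GA.T t‖ ≤ M * Real.exp (ω * t))
    (hMB : ∀ t : ℝ, 0 ≤ t → ‖GB.T t‖ ≤ M * Real.exp (ω * t)) (hω : ω < 0)
    (hdom : GA.dom = GB.dom) (D : X →L[ℂ] X)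
    (hD : ∀ x ∈ GA.dom, D x = GA.gen x - GB.gen x)
    {x : X} (hx : x ∈ GA.dom) {t : ℝ} (ht : 0 ≤ t) :
    ‖GA.T t x - GB.T t x‖ ≤ M ^ 2 * Real.exp (ω * t) * t * ‖D‖ * ‖x‖ := by
  have hM0 : 0 ≤ M := by
    have := le_trans (norm_nonneg (GA.T 0)) (hMA 0 le_rfl)
    simpa using this
  have hexp_le : ∀ u : ℝ, 0 ≤ u → Real.exp (ω * u) ≤ 1 := fun u hu =>
    Real.exp_le_one_iff.2 (mul_nonpos_of_nonpos_of_nonneg hω.le hu)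
  have hMA' : ∀ u : ℝ, 0 ≤ u → ‖GA.T u‖ ≤ M := fun u hu =>
    le_trans (hMA u hu) (by nlinarith [hexp_le u hu, Real.exp_pos (ω*u)])
  have hMB' : ∀ u : ℝ, 0 ≤ u → ‖GB.T u‖ ≤ M := fun u hu =>
    le_trans (hMB u hu) (by nlinarith [hexp_le u hu, Real.exp_pos (ω*u)])
  have hxB : x ∈ GB.dom := hdom ▸ hx
  set F : ℝ → X := fun s => GA.T (t - s) (GB.T s x) with hF
  set F' : ℝ → X := fun s => -(GA.T (t - s) (D (GB.T s x))) with hF'def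
  have hF' : ∀ s ∈ Icc (0:ℝ) t, HasDerivWithinAt F (F' s) (Icc 0 t) s := by
    intro s hs
    obtain ⟨hs0, hst⟩ := hs
    set z : X := GB.T s x with hz_def
    have hz : z ∈ GB.dom := (GB.T_mem_dom hxB hs0).1
    have hzA : z ∈ GA.dom := hdom ▸ hz
    have hts : (0:ℝ) ≤ t - s := by linarith
    rw [hasDerivWithinAt_iff_tendsto_slope]
    have term1 : Filter.Tendsto (fun y => GA.T (t - y) (slope (fun σ => GB.T σ x) s y))
        (nhdsWithin s (Icc 0 t \ {s})) (nhds (GA.T (t - s) (GB.T s (GB.gen x)))) := by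
      refine GA.tendsto_apply hMA' hts ?_ ?_ ?_
      · filter_upwards [self_mem_nhdsWithin] with y hy
        have := hy.1.2; linarith
      · have : Filter.Tendsto (fun y : ℝ => t - y) (nhds s) (nhds (t - s)) :=
          (continuous_const.sub continuous_id).tendsto s
        exact this.mono_left nhdsWithin_le_nhds
      · refine (GB.tendsto_slope_orbit hMB' hxB hs0).mono_left (nhdsWithin_mono _ ?_)
        intro y hy; exact ⟨hy.1.1, hy.2⟩
    have term2 : Filter.Tendsto (fun y => -slope (fun σ => GA.T σ z) (t - s) (t - y))
        (nhdsWithin s (Icc 0 t \ {s})) (nhds (-(GA.T (t - s) (GA.gen z)))) := by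
      have horb := GA.tendsto_slope_orbit hMA' hzA hts
      have hmap : Filter.Tendsto (fun y : ℝ => t - y) (nhdsWithin s (Icc 0 t \ {s}))
          (nhdsWithin (t - s) (Set.Ici 0 \ {t - s})) := by
        rw [tendsto_nhdsWithin_iff]
        constructor
        · exact ((continuous_const.sub continuous_id).tendsto s).mono_left nhdsWithin_le_nhds
        · filter_upwards [self_mem_nhdsWithin] with y hy
          refine ⟨by have := hy.1.2; simpa using this, ?_⟩
          simp only [mem_singleton_iff]
          intro hc
          exact hy.2 (show y = s by linarith)
      exact (horb.comp hmap).neg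
    have hsum := term1.add term2
    have hgenz : GB.gen z = GB.T s (GB.gen x) := (GB.T_mem_dom hxB hs0).2
    have hlim : GA.T (t - s) (GB.T s (GB.gen x)) + -(GA.T (t - s) (GA.gen z)) = F' s := by
      rw [hF'def]
      have : D z = GA.gen z - GB.gen z := hD z hzA
      simp only [hz_def] at this ⊢
      rw [this, map_sub, hgenz]
      abel
    rw [hlim] at hsum
    refine hsum.congr' ?_
    filter_upwards [self_mem_nhdsWithin] with y hy
    have hys : y - s ≠ 0 := sub_ne_zero.2 hy.2
    have h1 : ((t - y) - (t - s))⁻¹ = -((y - s)⁻¹) := by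
      rw [show (t - y) - (t - s) = -(y - s) by ring, inv_neg]
    simp only [slope_def_module, h1, neg_smul, neg_neg]
    rw [ContinuousLinearMap.map_smul_of_tower, map_sub, ← smul_add]
    show (y - s)⁻¹ • _ = (y - s)⁻¹ • _
    congr 1
    simp only [hF, hz_def]
    abel
  have bound : ∀ s ∈ Icc (0:ℝ) t, ‖F' s‖ ≤ M ^ 2 * Real.exp (ω * t) * ‖D‖ * ‖x‖ := by
    intro s hs
    obtain ⟨hs0, hst⟩ := hs
    have hts : (0:ℝ) ≤ t - s := by linarith
    have hz' : ‖GB.T s x‖ ≤ M * Real.exp (ω * s) * ‖x‖ :=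
      le_trans (le_opNorm _ _) (mul_le_mul_of_nonneg_right (hMB s hs0) (norm_nonneg x))
    have hDz : ‖D (GB.T s x)‖ ≤ ‖D‖ * (M * Real.exp (ω * s) * ‖x‖) :=
      le_trans (le_opNorm _ _) (mul_le_mul_of_nonneg_left hz' (norm_nonneg D))
    have h3 : ‖GA.T (t - s) (D (GB.T s x))‖
        ≤ (M * Real.exp (ω * (t - s))) * (‖D‖ * (M * Real.exp (ω * s) * ‖x‖)) := by
      refine le_trans (le_opNorm _ _) (mul_le_mul (hMA _ hts) hDz (norm_nonneg _) ?_)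
      exact mul_nonneg hM0 (Real.exp_pos _).le
    have heq : (M * Real.exp (ω * (t - s))) * (‖D‖ * (M * Real.exp (ω * s) * ‖x‖))
        = M ^ 2 * (Real.exp (ω * (t - s)) * Real.exp (ω * s)) * ‖D‖ * ‖x‖ := by ring
    rw [heq, ← Real.exp_add, show ω * (t - s) + ω * s = ω * t by ring] at h3
    simpa [hF'def] using h3
  have mvt := (convex_Icc (0:ℝ) t).norm_image_sub_le_of_norm_hasDerivWithin_le hF' bound
    (Set.left_mem_Icc.2 ht) (Set.right_mem_Icc.2 ht)
  have hFt : F t = GB.T t x := by simp [hF, GenOp.T_zero]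
  have hF0 : F 0 = GA.T t x := by simp [hF, GenOp.T_zero]
  rw [hFt, hF0] at mvt
  rw [norm_sub_rev]
  calc ‖GB.T t x - GA.T t x‖ ≤ M ^ 2 * Real.exp (ω * t) * ‖D‖ * ‖x‖ * ‖t - 0‖ := mvt
    _ = M ^ 2 * Real.exp (ω * t) * t * ‖D‖ * ‖x‖ := by
        rw [sub_zero, Real.norm_eq_abs, _root_.abs_of_nonneg ht]; ring

/-- Operator-norm version of the Duhamel bound, by density of the domain. -/
lemma duhamel_opnorm (GA GB : GenOp X) {M ω : ℝ}
    (hMA : ∀ t : ℝ, 0 ≤ t → ‖GA.T t‖ ≤ M * Real.exp (ω * t))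
    (hMB : ∀ t : ℝ, 0 ≤ t → ‖GB.T t‖ ≤ M * Real.exp (ω * t)) (hω : ω < 0)
    (hdom : GA.dom = GB.dom) (hdense : Dense ((GA.dom : Set X)))
    (D : X →L[ℂ] X) (hD : ∀ x ∈ GA.dom, D x = GA.gen x - GB.gen x)
    {t : ℝ} (ht : 0 ≤ t) :
    ‖GA.T t - GB.T t‖ ≤ M ^ 2 * Real.exp (ω * t) * t * ‖D‖ := by
  have hM0 : 0 ≤ M := by
    have := le_trans (norm_nonneg (GA.T 0)) (hMA 0 le_rfl)
    simpa using this
  have hC : 0 ≤ M ^ 2 * Real.exp (ω * t) * t * ‖D‖ := by positivity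
  refine opNorm_le_bound _ hC ?_
  intro x
  have hclosed : IsClosed {x : X | ‖GA.T t x - GB.T t x‖ ≤ M ^ 2 * Real.exp (ω * t) * t * ‖D‖ * ‖x‖} := by
    apply isClosed_le
    · exact (((GA.T t).continuous.sub (GB.T t).continuous).norm)
    · exact (continuous_const.mul continuous_norm)
  have hsub : (GA.dom : Set X) ⊆ {x : X | ‖GA.T t x - GB.T t x‖ ≤ M ^ 2 * Real.exp (ω * t) * t * ‖D‖ * ‖x‖} :=
    fun x hx => duhamel_bound GA GB hMA hMB hω hdom D hD hx ht
  have : (closure (GA.dom : Set X)) ⊆ {x : X | ‖GA.T t x - GB.T t x‖ ≤ M ^ 2 * Real.exp (ω * t) * t * ‖D‖ * ‖x‖} := by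
    rw [← hclosed.closure_eq]; exact closure_mono hsub
  have hx : x ∈ closure (GA.dom : Set X) := by rw [hdense.closure_eq]; trivial
  exact this hx

/-- Norm of a product of operators given by a tuple. -/
lemma ofFn_prod_norm_le {m : ℝ} (hm : 0 ≤ m) :
    ∀ (k : ℕ) (f : Fin k → (X →L[ℂ] X)), (∀ i, ‖f i‖ ≤ m) →
      ‖(List.ofFn f).prod‖ ≤ m ^ k := by
  intro k
  induction k with
  | zero => intro f _; simp [ContinuousLinearMap.norm_id_le, ContinuousLinearMap.one_def]
  | succ k ih =>
      intro f hf
      rw [List.ofFn_succ, List.prod_cons]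
      calc ‖f 0 * (List.ofFn fun i => f i.succ).prod‖
          ≤ ‖f 0‖ * ‖(List.ofFn fun i => f i.succ).prod‖ := norm_mul_le _ _
        _ ≤ m * m ^ k := by
            refine mul_le_mul (hf 0) (ih _ fun i => hf i.succ) (norm_nonneg _) hm
        _ = m ^ (k + 1) := (pow_succ' m k).symm

/-- Telescoping estimate for differences of products. -/
lemma ofFn_prod_sub_le {m : ℝ} (hm : 0 ≤ m) :
    ∀ (k : ℕ) (f g : Fin k → (X →L[ℂ] X)), (∀ i, ‖f i‖ ≤ m) → (∀ i, ‖g i‖ ≤ m) →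
      ‖(List.ofFn f).prod - (List.ofFn g).prod‖ ≤ m ^ (k - 1) * ∑ i, ‖f i - g i‖ := by
  intro k
  induction k with
  | zero => intro f g _ _; simp
  | succ k ih =>
      intro f g hf hg
      rw [List.ofFn_succ, List.ofFn_succ, List.prod_cons, List.prod_cons]
      set P := (List.ofFn fun i => f i.succ).prod with hP
      set Q := (List.ofFn fun i => g i.succ).prod with hQ
      have hsplit : f 0 * P - g 0 * Q = (f 0 - g 0) * P + g 0 * (P - Q) := by
        rw [sub_mul, mul_sub]; abel
      rw [hsplit]
      have h1 : ‖(f 0 - g 0) * P‖ ≤ ‖f 0 - g 0‖ * m ^ k :=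
        le_trans (norm_mul_le _ _) (mul_le_mul_of_nonneg_left
          (ofFn_prod_norm_le hm k _ fun i => hf i.succ) (norm_nonneg _))
      have h2 : ‖g 0 * (P - Q)‖ ≤ m * (m ^ (k - 1) * ∑ i : Fin k, ‖f i.succ - g i.succ‖) :=
        le_trans (norm_mul_le _ _) (mul_le_mul (hg 0)
          (ih _ _ (fun i => hf i.succ) (fun i => hg i.succ)) (norm_nonneg _) hm)
      have h3 : m * (m ^ (k - 1) * ∑ i : Fin k, ‖f i.succ - g i.succ‖)
          ≤ m ^ k * ∑ i : Fin k, ‖f i.succ - g i.succ‖ := by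
        rcases Nat.eq_zero_or_pos k with rfl | hk
        · simp
        · have : m * m ^ (k - 1) = m ^ k := by
            rw [← pow_succ']
            congr 1
            omega
          rw [← mul_assoc, this]
      calc ‖(f 0 - g 0) * P + g 0 * (P - Q)‖
          ≤ ‖(f 0 - g 0) * P‖ + ‖g 0 * (P - Q)‖ := norm_add_le _ _
        _ ≤ ‖f 0 - g 0‖ * m ^ k + m ^ k * ∑ i : Fin k, ‖f i.succ - g i.succ‖ := by
            exact add_le_add h1 (le_trans h2 h3)
        _ = m ^ ((k + 1) - 1) * ∑ i : Fin (k + 1), ‖f i - g i‖ := by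
            rw [Fin.sum_univ_succ]
            simp only [Nat.add_sub_cancel]
            ring

lemma semigrProd_succ {n : ℕ} (A : Fin (n + 1) → GenOp X) (u : Fin (n + 1) → ℝ) (x : X) :
    semigrProd A u x
      = (A 0).T (u 0) (semigrProd (fun i => A i.succ) (fun i => u i.succ) x) := by
  simp [semigrProd, List.ofFn_succ, ContinuousLinearMap.mul_apply]

lemma continuousOn_semigrProd_apply :
    ∀ (n : ℕ) (A : Fin n → GenOp X) (x : X),
      ContinuousOn (fun u => semigrProd A u x) {u : Fin n → ℝ | ∀ i, 0 ≤ u i} := by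
  intro n
  induction n with
  | zero =>
      intro A x
      have : (fun u : Fin 0 → ℝ => semigrProd A u x) = fun _ => x := by
        funext u; simp [semigrProd]
      rw [this]; exact continuousOn_const
  | succ n ih =>
      intro A x
      intro u₀ hu₀
      have heq : (fun u : Fin (n+1) → ℝ => semigrProd A u x)
          = fun u => (A 0).T (u 0) (semigrProd (fun i => A i.succ) (fun i => u i.succ) x) := by
        funext u; exact semigrProd_succ A u x
      rw [heq]
      obtain ⟨M0, hM0⟩ := (A 0).bounded
      unfold ContinuousWithinAt
      refine (A 0).tendsto_apply hM0 (hu₀ 0) ?_ ?_ ?_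
      · filter_upwards [self_mem_nhdsWithin] with u hu using hu 0
      · exact ((continuous_apply (0 : Fin (n+1))).tendsto u₀).mono_left nhdsWithin_le_nhds
      · have hIH := ih (fun i => A i.succ) x (fun i => u₀ i.succ)
          (fun i => hu₀ i.succ)
        refine hIH.tendsto.comp ?_
        rw [tendsto_nhdsWithin_iff]
        constructor
        · exact ((continuous_pi fun i : Fin n =>
            continuous_apply i.succ).tendsto u₀).mono_left nhdsWithin_le_nhds
        · filter_upwards [self_mem_nhdsWithin] with u hu
          exact fun i => hu i.succ

lemma integrable_exp_mul {n : ℕ} (ρ : BernsteinMeasure n) (ω : Fin n → ℝ)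
    (hω : ∀ i, ω i < 0) (i : Fin n) :
    Integrable (fun u : Fin n → ℝ => Real.exp (ω i * u i) * u i) ρ.μ := by
  have hsupp : ∀ᵐ u ∂ρ.μ, (∀ j, 0 ≤ u j) ∧ u ≠ 0 := ae_iff.2 ρ.support
  set s : Fin n → ℝ := fun j => ω j / 2 with hs_def
  have hs : ∀ j, s j < 0 := fun j => div_neg_of_neg_of_pos (hω j) two_pos
  set a : ℝ := -ω i with ha_def
  have ha : 0 < a := by simp [ha_def]; linarith [hω i]
  have hint : Integrable
      (fun u : Fin n → ℝ => (2 / a) * -(Real.exp (∑ j, s j * u j) - 1)) ρ.μ :=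
    ((ρ.integrable s hs).neg).const_mul _
  refine hint.mono ?_ ?_
  · exact ((Real.continuous_exp.comp (continuous_const.mul (continuous_apply i))).mul
      (continuous_apply i)).aestronglyMeasurable
  · filter_upwards [hsupp] with u hu
    obtain ⟨hpos, _⟩ := hu
    have hui : 0 ≤ u i := hpos i
    have h1 : ∑ j, s j * u j ≤ s i * u i := by
      have hadd := Finset.add_sum_erase Finset.univ (fun j => s j * u j) (Finset.mem_univ i)
      have hsum : ∑ j ∈ Finset.univ.erase i, s j * u j ≤ 0 :=
        Finset.sum_nonpos fun j _ => mul_nonpos_of_nonpos_of_nonneg (hs j).le (hpos j)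
      linarith
    have h2 : Real.exp (∑ j, s j * u j) ≤ Real.exp (s i * u i) := Real.exp_le_exp.2 h1
    -- key : u i * exp (-(a * u i)) ≤ (2/a) * (1 - exp (-(a/2 * u i)))
    have hkey : u i * Real.exp (-(a * u i)) ≤ (2 / a) * (1 - Real.exp (-(a / 2 * u i))) := by
      have e1 : 1 + a / 2 * u i ≤ Real.exp (a / 2 * u i) := by
        linarith [Real.add_one_le_exp (a / 2 * u i)]
      have e2 : Real.exp (-(a / 2 * u i)) * Real.exp (a / 2 * u i) = 1 := by
        rw [← Real.exp_add]; simp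
      have e3 : 0 < Real.exp (-(a / 2 * u i)) := Real.exp_pos _
      have e4 : Real.exp (-(a / 2 * u i)) + a / 2 * u i * Real.exp (-(a / 2 * u i)) ≤ 1 := by
        nlinarith
      have e5 : Real.exp (-(a * u i)) ≤ Real.exp (-(a / 2 * u i)) :=
        Real.exp_le_exp.2 (by nlinarith)
      have e6 : a / 2 * (u i * Real.exp (-(a * u i))) ≤ 1 - Real.exp (-(a / 2 * u i)) := by
        nlinarith [mul_le_mul_of_nonneg_left e5 (show (0:ℝ) ≤ a / 2 * u i by positivity), e4]
      calc u i * Real.exp (-(a * u i))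
          = (2 / a) * (a / 2 * (u i * Real.exp (-(a * u i)))) := by field_simp
        _ ≤ (2 / a) * (1 - Real.exp (-(a / 2 * u i))) := by
            refine mul_le_mul_of_nonneg_left e6 (by positivity)
    have hωa : ω i * u i = -(a * u i) := by rw [ha_def]; ring
    have hsa : s i * u i = -(a / 2 * u i) := by rw [hs_def, ha_def]; ring
    have hLHS : ‖Real.exp (ω i * u i) * u i‖ = u i * Real.exp (-(a * u i)) := by
      rw [hωa, Real.norm_eq_abs, _root_.abs_of_nonneg (by positivity), mul_comm]
    rw [hLHS]
    refine le_trans ?_ (le_abs_self _)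
    calc u i * Real.exp (-(a * u i))
        ≤ (2 / a) * (1 - Real.exp (-(a / 2 * u i))) := hkey
      _ ≤ (2 / a) * -(Real.exp (∑ j, s j * u j) - 1) := by
          refine mul_le_mul_of_nonneg_left ?_ (by positivity)
          have hh : Real.exp (∑ j, s j * u j) ≤ Real.exp (-(a / 2 * u i)) := by
            rw [← hsa]; exact h2
          linarith

/-- **Corollary 3.** Let `ψ ∈ 𝒯ₙ`.  For commuting families `A`, `B` from `Gen(X)ⁿ` with
`Aᵢ - Bᵢ` bounded (with bounded extension `D i`), `D(Aᵢ) = D(Bᵢ)`, and exponentially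
stable semigroups `‖T_{Aᵢ}(t)‖ ≤ M e^{ωᵢ t}`, `‖T_{Bᵢ}(t)‖ ≤ M e^{ωᵢ t}` with `ωᵢ < 0`,
the operator `ψ(A) - ψ(B)` is bounded and
`‖ψ(A) - ψ(B)‖ ≤ M^{n+1} ∑ᵢ (∂ψ(ωᵢ𝐞ᵢ)/∂sᵢ) ‖Aᵢ - Bᵢ‖`, where
`∂ψ(ωᵢ𝐞ᵢ)/∂sᵢ = ∫ e^{ωᵢ uᵢ} uᵢ dμ(u)`. -/
theorem bernstein_perturbation_exp_stable {n : ℕ} (hn : 0 < n) (ρ : BernsteinMeasure n)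
    (A B : Fin n → GenOp X)
    (hAcomm : ∀ i j, (A i).Commutes (A j)) (hBcomm : ∀ i j, (B i).Commutes (B j))
    (M : ℝ) (ω : Fin n → ℝ) (hω : ∀ i, ω i < 0)
    (hMA : ∀ i, ∀ t : ℝ, 0 ≤ t → ‖(A i).T t‖ ≤ M * Real.exp (ω i * t))
    (hMB : ∀ i, ∀ t : ℝ, 0 ≤ t → ‖(B i).T t‖ ≤ M * Real.exp (ω i * t))
    (hdom : ∀ i, (A i).dom = (B i).dom)
    (hdense : ∀ i, Dense ((A i).dom : Set X))
    (D : Fin n → (X →L[ℂ] X))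
    (hD : ∀ i, ∀ x ∈ (A i).dom, D i x = (A i).gen x - (B i).gen x) :
    ∃ S : X →L[ℂ] X,
      (∀ x ∈ ⨅ i, (A i).dom, S x = ∫ u, (semigrProd A u x - semigrProd B u x) ∂ρ.μ) ∧
      ‖S‖ ≤ M ^ (n + 1) * ∑ i, (∫ u, Real.exp (ω i * u i) * u i ∂ρ.μ) * ‖D i‖ := by
  classical
  have i0 : Fin n := ⟨0, hn⟩
  have hM0 : 0 ≤ M := by
    have := le_trans (norm_nonneg ((A i0).T 0)) (hMA i0 0 le_rfl)
    simpa using this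
  have hexp_le : ∀ (i : Fin n) (u : ℝ), 0 ≤ u → Real.exp (ω i * u) ≤ 1 := fun i u hu =>
    Real.exp_le_one_iff.2 (mul_nonpos_of_nonpos_of_nonneg (hω i).le hu)
  have hMA' : ∀ (i : Fin n) (t : ℝ), 0 ≤ t → ‖(A i).T t‖ ≤ M := fun i t ht =>
    le_trans (hMA i t ht) (by nlinarith [hexp_le i t ht, Real.exp_pos (ω i * t)])
  have hMB' : ∀ (i : Fin n) (t : ℝ), 0 ≤ t → ‖(B i).T t‖ ≤ M := fun i t ht =>
    le_trans (hMB i t ht) (by nlinarith [hexp_le i t ht, Real.exp_pos (ω i * t)])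
  set Q : Set (Fin n → ℝ) := {u | ∀ i, 0 ≤ u i} with hQ_def
  have hsupp : ∀ᵐ u ∂ρ.μ, (∀ i, 0 ≤ u i) ∧ u ≠ 0 := ae_iff.2 ρ.support
  have hQae : ∀ᵐ u ∂ρ.μ, u ∈ Q := hsupp.mono fun u h => h.1
  -- pointwise operator bound
  set Φ : (Fin n → ℝ) → ℝ :=
      fun u => M ^ (n + 1) * ∑ i, Real.exp (ω i * u i) * u i * ‖D i‖ with hΦ_def
  have hop : ∀ u ∈ Q, ‖semigrProd A u - semigrProd B u‖ ≤ Φ u := by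
    intro u hu
    have h1 := ofFn_prod_sub_le hM0 n (fun i => (A i).T (u i)) (fun i => (B i).T (u i))
      (fun i => hMA' i _ (hu i)) (fun i => hMB' i _ (hu i))
    have h2 : ∀ i : Fin n, ‖(A i).T (u i) - (B i).T (u i)‖
        ≤ M ^ 2 * (Real.exp (ω i * u i) * u i * ‖D i‖) := by
      intro i
      have := duhamel_opnorm (A i) (B i) (hMA i) (hMB i) (hω i) (hdom i) (hdense i)
        (D i) (hD i) (hu i)
      calc ‖(A i).T (u i) - (B i).T (u i)‖
          ≤ M ^ 2 * Real.exp (ω i * u i) * (u i) * ‖D i‖ := this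
        _ = M ^ 2 * (Real.exp (ω i * u i) * u i * ‖D i‖) := by ring
    have hsum : ∑ i : Fin n, ‖(A i).T (u i) - (B i).T (u i)‖
        ≤ ∑ i : Fin n, M ^ 2 * (Real.exp (ω i * u i) * u i * ‖D i‖) :=
      Finset.sum_le_sum fun i _ => h2 i
    have hpow : M ^ (n - 1) * M ^ 2 = M ^ (n + 1) := by
      rw [← pow_add]; congr 1; omega
    calc ‖semigrProd A u - semigrProd B u‖
        ≤ M ^ (n - 1) * ∑ i : Fin n, ‖(A i).T (u i) - (B i).T (u i)‖ := h1
      _ ≤ M ^ (n - 1) * ∑ i : Fin n, M ^ 2 * (Real.exp (ω i * u i) * u i * ‖D i‖) :=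
          mul_le_mul_of_nonneg_left hsum (pow_nonneg hM0 _)
      _ = Φ u := by
          rw [← Finset.mul_sum, ← mul_assoc, hpow]
  have hΦpos : ∀ᵐ u ∂ρ.μ, 0 ≤ Φ u := by
    filter_upwards [hQae] with u hu
    refine mul_nonneg (pow_nonneg hM0 _) (Finset.sum_nonneg fun i _ => ?_)
    exact mul_nonneg (mul_nonneg (Real.exp_pos _).le (hu i)) (norm_nonneg _)
  have hΦint : Integrable Φ ρ.μ := by
    refine Integrable.const_mul ?_ _
    exact integrable_finset_sum _ fun i _ => (integrable_exp_mul ρ ω hω i).mul_const _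
  have hQmeas : MeasurableSet Q := by
    have : Q = ⋂ i, (fun u : Fin n → ℝ => u i) ⁻¹' (Set.Ici 0) := by
      ext u; simp [hQ_def, Set.mem_iInter]
    rw [this]
    exact MeasurableSet.iInter fun i => (measurable_pi_apply i) measurableSet_Ici
  -- integrability of the vector integrand
  have hmeas : ∀ x : X, AEStronglyMeasurable
      (fun u => semigrProd A u x - semigrProd B u x) ρ.μ := by
    intro x
    have hcont : ContinuousOn (fun u => semigrProd A u x - semigrProd B u x) Q :=
      (continuousOn_semigrProd_apply n A x).sub (continuousOn_semigrProd_apply n B x)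
    have h5 := ContinuousOn.aestronglyMeasurable (μ := ρ.μ) hcont hQmeas
    rwa [Measure.restrict_eq_self_of_ae_mem hQae] at h5
  have hbound : ∀ x : X, ∀ᵐ u ∂ρ.μ,
      ‖semigrProd A u x - semigrProd B u x‖ ≤ Φ u * ‖x‖ := by
    intro x
    filter_upwards [hQae] with u hu
    calc ‖semigrProd A u x - semigrProd B u x‖
        = ‖(semigrProd A u - semigrProd B u) x‖ := by rw [ContinuousLinearMap.sub_apply]
      _ ≤ ‖semigrProd A u - semigrProd B u‖ * ‖x‖ := le_opNorm _ _
      _ ≤ Φ u * ‖x‖ := mul_le_mul_of_nonneg_right (hop u hu) (norm_nonneg x)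
  have hint : ∀ x : X, Integrable (fun u => semigrProd A u x - semigrProd B u x) ρ.μ := by
    intro x
    exact Integrable.mono' (hΦint.mul_const ‖x‖) (hmeas x) (hbound x)
  -- the linear map
  set L : X →ₗ[ℂ] X :=
    { toFun := fun x => ∫ u, (semigrProd A u x - semigrProd B u x) ∂ρ.μ
      map_add' := by
        intro x y
        have heq : (fun u => semigrProd A u (x + y) - semigrProd B u (x + y))
            = fun u => (semigrProd A u x - semigrProd B u x)
                + (semigrProd A u y - semigrProd B u y) := by
          funext u; simp only [map_add]; abel
        change ∫ u, (semigrProd A u (x + y) - semigrProd B u (x + y)) ∂ρ.μ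
          = (∫ u, (semigrProd A u x - semigrProd B u x) ∂ρ.μ)
            + ∫ u, (semigrProd A u y - semigrProd B u y) ∂ρ.μ
        rw [heq, integral_add (hint x) (hint y)]
      map_smul' := by
        intro c x
        have heq : (fun u => semigrProd A u (c • x) - semigrProd B u (c • x))
            = fun u => c • (semigrProd A u x - semigrProd B u x) := by
          funext u; simp only [_root_.map_smul, smul_sub]
        change ∫ u, (semigrProd A u (c • x) - semigrProd B u (c • x)) ∂ρ.μ
          = c • ∫ u, (semigrProd A u x - semigrProd B u x) ∂ρ.μ
        rw [heq, integral_smul] } with hL_def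
  have hLb : ∀ x : X, ‖L x‖ ≤ (∫ u, Φ u ∂ρ.μ) * ‖x‖ := by
    intro x
    have h1 : ‖L x‖ ≤ ∫ u, Φ u * ‖x‖ ∂ρ.μ :=
      norm_integral_le_of_norm_le (hΦint.mul_const ‖x‖) (hbound x)
    rwa [integral_mul_const] at h1
  refine ⟨LinearMap.mkContinuous L (∫ u, Φ u ∂ρ.μ) hLb, fun x _ => rfl, ?_⟩
  have hnorm := LinearMap.mkContinuous_norm_le L (integral_nonneg_of_ae hΦpos) hLb
  refine le_trans hnorm (le_of_eq ?_)
  rw [hΦ_def]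
  rw [integral_const_mul]
  congr 1
  rw [integral_finset_sum _ fun i _ => (integrable_exp_mul ρ ω hω i).mul_const _]
  exact Finset.sum_congr rfl fun i _ => integral_mul_const _ _
end
end

section
/- Let ψ ∈ 𝒯ₙ (with c₀ = 0, c₁ = 0 in its integral representation). For every commuting family A = (A₁,…,Aₙ) of compact operators from Gen(X), the operator ψ(A) is compact. -/
open MeasureTheory Complex ContinuousLinearMap

noncomputable section

variable {X : Type*} [NormedAddCommGroup X] [NormedSpace ℂ X] [CompleteSpace X]

/-! A generator that is an everywhere defined bounded operator `G` generates `t ↦ exp (t • G)`: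
both `T t x` and `exp (t • G) x` solve `u' = G u`, `u 0 = x` (the semigroup commutes with its
generator), so they agree by uniqueness of ODE solutions. Hence `T_{Aᵢ}(t) - 1 = exp (t • Gᵢ) - 1`
is compact, every term of its exponential series being a multiple of a power of `Gᵢ`, and by the
mean value theorem and uniform boundedness its norm is `O(min t 1) = O(1 - e^{-t})`. Telescoping
the product `T_A(u) - 1` bounds it by `O(1 - e^{-∑ uᵢ})`, which is `μ`-integrable (it is minus the
integrand of `ψ` at `s = (-1, …, -1)`), so `∫ (T_A(u) - 1) dμ(u)` is a Bochner integral with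
values in the closed subspace of compact operators. -/

open Filter Set Topology NormedSpace

section ProductsOfNearIdentity

variable {R : Type*} [NormedRing R]

theorem norm_prod_ofFn_sub_one_le {M : ℝ} (hM : 1 ≤ M) :
    ∀ {n : ℕ} (f : Fin n → R), (∀ i, ‖f i‖ ≤ M) →
      ‖(List.ofFn f).prod - 1‖ ≤ M ^ n * ∑ i, ‖f i - 1‖
  | 0, _, _ => by simp
  | n + 1, f, hf => by
    have ih := norm_prod_ofFn_sub_one_le hM (fun i => f i.succ) fun i => hf i.succ
    have hMn : 1 ≤ M ^ (n + 1) := one_le_pow₀ hM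
    rw [List.ofFn_succ, List.prod_cons, Fin.sum_univ_succ]
    calc ‖f 0 * (List.ofFn fun i => f i.succ).prod - 1‖
        = ‖f 0 * ((List.ofFn fun i => f i.succ).prod - 1) + (f 0 - 1)‖ := by noncomm_ring
      _ ≤ M * (M ^ n * ∑ i : Fin n, ‖f i.succ - 1‖) + ‖f 0 - 1‖ := by
          refine (norm_add_le _ _).trans (add_le_add ?_ le_rfl)
          exact (norm_mul_le _ _).trans (mul_le_mul (hf 0) ih (norm_nonneg _) (by linarith))
      _ ≤ M ^ (n + 1) * (‖f 0 - 1‖ + ∑ i : Fin n, ‖f i.succ - 1‖) := by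
          have := mul_le_mul_of_nonneg_right hMn (norm_nonneg (f 0 - 1))
          rw [pow_succ'] at this ⊢
          linarith

end ProductsOfNearIdentity

section CompactOperators

variable {𝕜 E : Type*} [RCLike 𝕜] [NormedAddCommGroup E] [NormedSpace 𝕜 E]

theorem isCompactOperator_mul {S T : E →L[𝕜] E} (hT : IsCompactOperator T) :
    IsCompactOperator (S * T) :=
  hT.clm_comp S

theorem isCompactOperator_prod_ofFn_sub_one :
    ∀ {n : ℕ} (f : Fin n → E →L[𝕜] E), (∀ i, IsCompactOperator ⇑(f i - 1)) →
      IsCompactOperator ⇑((List.ofFn f).prod - 1)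
  | 0, _, _ => by simpa using isCompactOperator_zero
  | n + 1, f, hf => by
    have ih := isCompactOperator_prod_ofFn_sub_one (fun i => f i.succ) fun i => hf i.succ
    have hsplit : (List.ofFn f).prod - 1
        = f 0 * ((List.ofFn fun i => f i.succ).prod - 1) + (f 0 - 1) := by
      rw [List.ofFn_succ, List.prod_cons]; noncomm_ring
    rw [hsplit]
    exact (isCompactOperator_mul ih).add (hf 0)

variable [CompleteSpace E]

theorem isCompactOperator_exp_sub_one {A : E →L[𝕜] E} (hA : IsCompactOperator A) :
    IsCompactOperator ⇑(exp A - 1) := by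
  have hsum : HasSum (fun k : ℕ => ((k + 1).factorial⁻¹ : 𝕜) • A ^ (k + 1)) (exp A - 1) := by
    simpa using (hasSum_nat_add_iff' 1).2 (exp_series_hasSum_exp' (𝕂 := 𝕜) A)
  refine isCompactOperator_of_tendsto hsum (Eventually.of_forall fun s => ?_)
  exact Submodule.sum_mem (compactOperator (RingHom.id 𝕜) E E) fun k _ =>
    (isCompactOperator_mul hA).smul _

end CompactOperators

theorem integral_mem_of_isClosed {α E : Type*} [MeasurableSpace α] {μ : Measure α}
    [NormedAddCommGroup E] [NormedSpace ℝ E] [CompleteSpace E] {p : Submodule ℝ E}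
    (hp : IsClosed (p : Set E)) {f : α → E} (hf : Integrable f μ) (hfp : ∀ a, f a ∈ p) :
    ∫ a, f a ∂μ ∈ p := by
  have : CompleteSpace p := hp.completeSpace_coe
  set g : α → p := fun a => ⟨f a, hfp a⟩
  have hg : Integrable g μ :=
    ⟨IsEmbedding.subtypeVal.aestronglyMeasurable_comp_iff.1 hf.1, hf.2⟩
  have : ∫ a, f a ∂μ = p.subtypeL (∫ a, g a ∂μ) := p.subtypeL.integral_comp_comm hg
  exact this ▸ (∫ a, g a ∂μ).2

theorem isCompactOperator_integral {α E : Type*} [MeasurableSpace α] {μ : Measure α}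
    [NormedAddCommGroup E] [NormedSpace ℂ E] [CompleteSpace E] {F : α → E →L[ℂ] E}
    (hF : Integrable F μ) (hFc : ∀ a, IsCompactOperator (F a)) :
    IsCompactOperator ⇑(∫ a, F a ∂μ) :=
  integral_mem_of_isClosed (p := (compactOperator (RingHom.id ℂ) E E).restrictScalars ℝ)
    isClosed_setOfPred_isCompactOperator hF hFc

theorem one_sub_exp_neg_one_mul_min_le {t : ℝ} (ht : 0 ≤ t) :
    (1 - Real.exp (-1)) * min t 1 ≤ 1 - Real.exp (-t) := by
  rcases le_total t 1 with h | h
  · rw [min_eq_left h]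
    have hconv := convexOn_exp.2 (mem_univ (-1)) (mem_univ 0) ht (by linarith : 0 ≤ 1 - t)
      (by ring)
    simp only [smul_eq_mul, mul_zero, add_zero, mul_neg, mul_one, Real.exp_zero] at hconv
    linarith
  · rw [min_eq_right h]
    linarith [Real.exp_le_exp.2 (by linarith : -t ≤ -1)]

section ExpSmul

variable {𝔸 : Type*} [NormedRing 𝔸] [NormedAlgebra ℝ 𝔸] [CompleteSpace 𝔸]

theorem norm_exp_smul_sub_one_le {A : 𝔸} {M t : ℝ} (hM : ∀ s ∈ Ico 0 t, ‖exp (s • A)‖ ≤ M)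
    (ht : 0 ≤ t) : ‖exp (t • A) - 1‖ ≤ M * ‖A‖ * t := by
  have hmvt := norm_image_sub_le_of_norm_deriv_le_segment'
    (f := fun s : ℝ => exp (s • A)) (fun s _ => (hasDerivAt_exp_smul_const A s).hasDerivWithinAt)
    (fun s hs => (norm_mul_le _ _).trans (mul_le_mul_of_nonneg_right (hM s hs) (norm_nonneg A)))
    t ⟨ht, le_rfl⟩
  simpa using hmvt

theorem exists_norm_exp_smul_sub_one_le {A : 𝔸} {M : ℝ}
    (hM : ∀ t : ℝ, 0 ≤ t → ‖exp (t • A)‖ ≤ M) :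
    ∃ K, 0 ≤ K ∧ ∀ t : ℝ, 0 ≤ t → ‖exp (t • A) - 1‖ ≤ K * (1 - Real.exp (-t)) := by
  have hM0 : 0 ≤ M := (norm_nonneg _).trans (hM 0 le_rfl)
  have hc : 0 < 1 - Real.exp (-1) := by
    linarith [Real.exp_lt_one_iff.2 (by norm_num : (-1 : ℝ) < 0)]
  set L := M * ‖A‖ + M + ‖(1 : 𝔸)‖
  have hL : 0 ≤ L := by positivity
  refine ⟨L / (1 - Real.exp (-1)), by positivity, fun t ht => ?_⟩
  have hmin : ‖exp (t • A) - 1‖ ≤ L * min t 1 := by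
    rcases le_total t 1 with h | h
    · rw [min_eq_left h]
      have := norm_exp_smul_sub_one_le (fun s hs => hM s hs.1) ht
      nlinarith [norm_nonneg (1 : 𝔸)]
    · rw [min_eq_right h, mul_one]
      nlinarith [norm_sub_le (exp (t • A)) 1, hM t ht, norm_nonneg A]
  calc ‖exp (t • A) - 1‖ ≤ L * min t 1 := hmin
    _ ≤ L * ((1 - Real.exp (-t)) / (1 - Real.exp (-1))) := by
        gcongr
        rw [le_div_iff₀ hc, mul_comm]
        exact one_sub_exp_neg_one_mul_min_le ht
    _ = L / (1 - Real.exp (-1)) * (1 - Real.exp (-t)) := by ring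

theorem continuous_prod_ofFn_exp_smul {n : ℕ} (G : Fin n → 𝔸) :
    Continuous fun u : Fin n → ℝ => (List.ofFn fun i => exp (u i • G i)).prod := by
  simp only [List.ofFn_eq_map]
  exact continuous_list_prod _ fun i _ =>
    (differentiable_exp_smul_const ℝ (G i)).continuous.comp (continuous_apply i)

end ExpSmul

namespace BernsteinMeasure

variable {n : ℕ} (ρ : BernsteinMeasure n)

theorem ae_nonneg : ∀ᵐ u ∂ρ.μ, ∀ i, 0 ≤ u i :=
  (ae_iff.2 ρ.support).mono fun _ hu => hu.1

theorem integrable_one_sub_exp_neg_sum :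
    Integrable (fun u : Fin n → ℝ => 1 - Real.exp (-∑ i, u i)) ρ.μ :=
  (ρ.integrable (fun _ => -1) fun _ => by norm_num).neg.congr (.of_forall fun u => by simp)

theorem integrable_prod_ofFn_exp_smul_sub_one {𝔸 : Type*} [NormedRing 𝔸] [NormedAlgebra ℝ 𝔸]
    [CompleteSpace 𝔸] {G : Fin n → 𝔸} {M : ℝ} (hM : ∀ i, ∀ t : ℝ, 0 ≤ t → ‖exp (t • G i)‖ ≤ M) :
    Integrable (fun u : Fin n → ℝ => (List.ofFn fun i => exp (u i • G i)).prod - 1) ρ.μ := by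
  choose K hK0 hK using fun i => exists_norm_exp_smul_sub_one_le (hM i)
  set M₁ := max M 1
  refine (ρ.integrable_one_sub_exp_neg_sum.const_mul (M₁ ^ n * ∑ i, K i)).mono'
    ((continuous_prod_ofFn_exp_smul G).sub continuous_const).aestronglyMeasurable ?_
  filter_upwards [ρ.ae_nonneg] with u hu
  calc ‖(List.ofFn fun i => exp (u i • G i)).prod - 1‖
      ≤ M₁ ^ n * ∑ i, ‖exp (u i • G i) - 1‖ :=
        norm_prod_ofFn_sub_one_le (le_max_right _ _) _ fun i =>
          (hM i _ (hu i)).trans (le_max_left _ _)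
    _ ≤ M₁ ^ n * ∑ i, K i * (1 - Real.exp (-∑ j, u j)) := by
        gcongr with i
        refine (hK i _ (hu i)).trans (mul_le_mul_of_nonneg_left ?_ (hK0 i))
        gcongr
        exact Finset.single_le_sum (fun j _ => hu j) (Finset.mem_univ i)
    _ = (M₁ ^ n * ∑ i, K i) * (1 - Real.exp (-∑ j, u j)) := by rw [← Finset.sum_mul, mul_assoc]

end BernsteinMeasure

namespace GenOp

variable {E : Type*} [NormedAddCommGroup E] [NormedSpace ℂ E] {B : GenOp E} {G : E →L[ℂ] E}

theorem tendsto_slope_zero_T (hdom : B.dom = ⊤) (hG : ∀ x, B.gen x = G x) (x : E) :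
    Tendsto (fun h : ℝ => h⁻¹ • (B.T h x - x)) (𝓝[>] 0) (𝓝 (G x)) := by
  have h := B.gen_spec x (by simp [hdom])
  rw [hG] at h
  simpa only [← Complex.ofReal_inv, Complex.coe_smul] using h

theorem T_apply_comm {s t : ℝ} (hs : 0 ≤ s) (ht : 0 ≤ t) (x : E) :
    B.T s (B.T t x) = B.T t (B.T s x) := by
  rw [← ContinuousLinearMap.comp_apply, ← B.T_add hs ht, add_comm, B.T_add ht hs,
    ContinuousLinearMap.comp_apply]

theorem T_apply_gen (hdom : B.dom = ⊤) (hG : ∀ x, B.gen x = G x) {t : ℝ} (ht : 0 ≤ t)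
    (x : E) : B.T t (G x) = G (B.T t x) := by
  refine tendsto_nhds_unique ?_ (tendsto_slope_zero_T hdom hG (B.T t x))
  refine (((B.T t).continuous.tendsto _).comp (tendsto_slope_zero_T hdom hG x)).congr' ?_
  filter_upwards [self_mem_nhdsWithin] with h hh
  simp [T_apply_comm hh.out.le ht, map_sub]

theorem hasDerivWithinAt_T_apply (hdom : B.dom = ⊤) (hG : ∀ x, B.gen x = G x) {t : ℝ}
    (ht : 0 ≤ t) (x : E) : HasDerivWithinAt (fun s => B.T s x) (G (B.T t x)) (Ici t) t := by
  rw [← hasDerivWithinAt_Ioi_iff_Ici, hasDerivWithinAt_iff_tendsto_slope' self_notMem_Ioi,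
    ← T_apply_gen hdom hG ht, ← add_zero t, ← map_add_left_nhdsGT, tendsto_map'_iff, add_zero]
  refine (((B.T t).continuous.tendsto _).comp (tendsto_slope_zero_T hdom hG x)).congr' ?_
  filter_upwards [self_mem_nhdsWithin] with h hh
  simp [slope, B.T_add ht hh.out.le, map_sub]

theorem T_eq_exp [CompleteSpace E] (hdom : B.dom = ⊤) (hG : ∀ x, B.gen x = G x) {t : ℝ}
    (ht : 0 ≤ t) : B.T t = exp (t • G) := by
  ext x
  have hexp (s : ℝ) : HasDerivAt (fun s : ℝ => exp (s • G) x) (G (exp (s • G) x)) s :=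
    ((ContinuousLinearMap.apply ℂ E x).restrictScalars ℝ).hasFDerivAt.comp_hasDerivAt s
      (hasDerivAt_exp_smul_const' G s)
  refine ODE_solution_unique_of_mem_Icc_right (v := fun _ => G) (s := fun _ => univ)
    (fun _ _ => G.lipschitz.lipschitzOnWith) ((B.strong_cont x).mono Icc_subset_Ici_self)
    (fun s hs => hasDerivWithinAt_T_apply hdom hG hs.1 x) (fun _ _ => mem_univ _)
    (fun s _ => (hexp s).continuousAt.continuousWithinAt) (fun s _ => (hexp s).hasDerivWithinAt)
    (fun _ _ => mem_univ _) (by simp [B.T_zero]) ⟨ht, le_rfl⟩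

end GenOp

theorem bernstein_value_compact_general {n : ℕ} (ρ : BernsteinMeasure n)
    (A : Fin n → GenOp X)
    (MA : ℝ)
    (hMA : ∀ i, ∀ t : ℝ, 0 ≤ t → ‖(A i).T t‖ ≤ MA)
    (hdomtop : ∀ i, (A i).dom = ⊤)
    (G : Fin n → (X →L[ℂ] X))
    (hG : ∀ i, ∀ x : X, (A i).gen x = G i x)
    (hGcpt : ∀ i, IsCompactOperator (G i)) :
    ∃ S : X →L[ℂ] X,
      (∀ x : X, S x = ∫ u, (semigrProd A u x - x) ∂ρ.μ) ∧
      IsCompactOperator S := by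
  have hT : ∀ i, ∀ t : ℝ, 0 ≤ t → (A i).T t = exp (t • G i) :=
    fun i t ht => (A i).T_eq_exp (hdomtop i) (hG i) ht
  have hF_int := ρ.integrable_prod_ofFn_exp_smul_sub_one (G := G) fun i t ht =>
    hT i t ht ▸ hMA i t ht
  refine ⟨∫ u, ((List.ofFn fun i => exp (u i • G i)).prod - 1) ∂ρ.μ, fun x => ?_,
    isCompactOperator_integral hF_int fun u => ?_⟩
  · rw [ContinuousLinearMap.integral_apply hF_int]
    refine integral_congr_ae (ρ.ae_nonneg.mono fun u hu => ?_)
    simp [semigrProd, hT _ _ (hu _)]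
  · exact isCompactOperator_prod_ofFn_sub_one _ fun i =>
      isCompactOperator_exp_sub_one ((hGcpt i).smul (u i))

/-- **Corollary 7.** Let `ψ ∈ 𝒯ₙ` (with `c₀ = 0`, `c₁ = 0`).  For every commuting
family `A = (A₁, …, Aₙ)` of compact operators from `Gen(X)` (i.e. each generator `Aᵢ`
is an everywhere defined compact operator `G i`), the operator `ψ(A)` is compact. -/
theorem bernstein_value_compact {n : ℕ} (hn : 0 < n) (ρ : BernsteinMeasure n)
    (A : Fin n → GenOp X)
    (hAcomm : ∀ i j, (A i).Commutes (A j))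
    (MA : ℝ)
    (hMA : ∀ i, ∀ t : ℝ, 0 ≤ t → ‖(A i).T t‖ ≤ MA)
    (hdomtop : ∀ i, (A i).dom = ⊤)
    (G : Fin n → (X →L[ℂ] X))
    (hG : ∀ i, ∀ x : X, (A i).gen x = G i x)
    (hGcpt : ∀ i, IsCompactOperator (G i)) :
    ∃ S : X →L[ℂ] X,
      (∀ x : X, S x = ∫ u, (semigrProd A u x - x) ∂ρ.μ) ∧
      IsCompactOperator S :=
  bernstein_value_compact_general ρ A MA hMA hdomtop G hG hGcpt
end
end
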